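/- arXiv:math/0610835 — 4 statements merged into one kernel-verified Lean document; each statement's English description precedes it below -/
import Mathlib

section
/- Let p₀, p₁, p₂ be nonnegative integrable densities on a measurable space, k ≥ 0, and R₀ = {x : p₁(x) + p₂(x) > k·p₀(x)}. Suppose further that ∫_{R₀} p₁ = ∫_{R₀} p₂. Then for any measurable R with ∫_R p₀ ≤ ∫_{R₀} p₀ and ∫_R p₁ = ∫_R p₂, one has ∫_R p₁ ≤ ∫_{R₀} p₁ and ∫_R p₂ ≤ ∫_{R₀} p₂. -/
open MeasureTheory

theorem avg_lr_test_optimal {X : Type*} [MeasurableSpace X] (μ : Measure X) [SigmaFinite μ]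
    (p₀ p₁ p₂ : X → ℝ)
    (hp₀_meas : Measurable p₀) (hp₁_meas : Measurable p₁) (hp₂_meas : Measurable p₂)
    (hp₀_nonneg : ∀ x, 0 ≤ p₀ x) (hp₁_nonneg : ∀ x, 0 ≤ p₁ x) (hp₂_nonneg : ∀ x, 0 ≤ p₂ x)
    (hp₀_int : Integrable p₀ μ) (hp₁_int : Integrable p₁ μ) (hp₂_int : Integrable p₂ μ)
    (k : ℝ) (hk : 0 ≤ k)
    (R₀ : Set X) (hR₀ : R₀ = {x | p₁ x + p₂ x > k * p₀ x})
    (hR₀_sym : ∫ x in R₀, p₁ x ∂μ = ∫ x in R₀, p₂ x ∂μ)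
    (R : Set X) (hR : MeasurableSet R)
    (hlevel : ∫ x in R, p₀ x ∂μ ≤ ∫ x in R₀, p₀ x ∂μ)
    (hR_sym : ∫ x in R, p₁ x ∂μ = ∫ x in R, p₂ x ∂μ) :
    ∫ x in R, p₁ x ∂μ ≤ ∫ x in R₀, p₁ x ∂μ ∧
    ∫ x in R, p₂ x ∂μ ≤ ∫ x in R₀, p₂ x ∂μ := by
  have hR₀_meas : MeasurableSet R₀ := by
    rw [hR₀]
    exact measurableSet_lt (hp₀_meas.const_mul k) (hp₁_meas.add hp₂_meas)
  set f : X → ℝ := fun x => p₁ x + p₂ x - k * p₀ x with hf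
  have hf_int : Integrable f μ := (hp₁_int.add hp₂_int).sub (hp₀_int.const_mul k)
  -- decompose integrals
  have hdec : ∀ S : Set X, MeasurableSet S → ∀ T : Set X, MeasurableSet T →
      ∫ x in S, f x ∂μ = (∫ x in S ∩ T, f x ∂μ) + ∫ x in S \ T, f x ∂μ := by
    intro S hS T hT
    rw [← setIntegral_union (Set.disjoint_sdiff_right.mono_left Set.inter_subset_right)
      (hS.diff hT) (hf_int.integrableOn) (hf_int.integrableOn),
      Set.inter_union_diff]
  have h1 : ∫ x in R \ R₀, f x ∂μ ≤ 0 := by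
    apply setIntegral_nonpos (hR.diff hR₀_meas)
    intro x hx
    have : ¬ (p₁ x + p₂ x > k * p₀ x) := by
      intro h; exact hx.2 (by rw [hR₀]; exact h)
    simp only [hf]; linarith [not_lt.mp this]
  have h2 : 0 ≤ ∫ x in R₀ \ R, f x ∂μ := by
    apply setIntegral_nonneg (hR₀_meas.diff hR)
    intro x hx
    have : p₁ x + p₂ x > k * p₀ x := by rw [hR₀] at hx; exact hx.1
    simp only [hf]; linarith
  have key : ∫ x in R, f x ∂μ ≤ ∫ x in R₀, f x ∂μ := by
    rw [hdec R hR R₀ hR₀_meas, hdec R₀ hR₀_meas R hR, Set.inter_comm R R₀]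
    linarith
  have hexp : ∀ S : Set X, ∫ x in S, f x ∂μ
      = (∫ x in S, p₁ x ∂μ) + (∫ x in S, p₂ x ∂μ) - k * ∫ x in S, p₀ x ∂μ := by
    intro S
    simp only [hf]
    have h := integral_sub (μ := μ.restrict S)
      ((hp₁_int.add hp₂_int).integrableOn) ((hp₀_int.const_mul k).integrableOn)
    simp only [Pi.add_apply] at h
    rw [h, integral_add hp₁_int.integrableOn hp₂_int.integrableOn, MeasureTheory.integral_const_mul]
  rw [hexp R, hexp R₀] at key
  have hk' : k * ∫ x in R, p₀ x ∂μ ≤ k * ∫ x in R₀, p₀ x ∂μ :=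
    mul_le_mul_of_nonneg_left hlevel hk
  constructor <;> linarith
end

section
/- Suppose f : [0,1] → ℝ≥0 is a concave probability density. For the test rejecting when |x−1/2| ≤ c, its power ∫_{|x−1/2|≤c} f(x) dx is at least its level 2c (the Lebesgue measure of the rejection region). -/
/-!
Concavity gives `f ((x + (1 - x)) / 2) ≥ (f x + f (1 - x)) / 2`; integrating, `f (1/2) ≥ 1`
(Hermite–Hadamard). Contracting `[0, 1]` towards `1/2` by the factor `t = 2c`, concavity gives
`f (t u + (1 - t)/2) ≥ t f u + (1 - t) f (1/2)`, and integrating over `u ∈ [0, 1]` shows that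
the mean of `f` over the central interval `[1/2 - c, 1/2 + c]` is at least
`t + (1 - t) f (1/2) ≥ 1`.
-/

open MeasureTheory Set

theorem IntervalIntegrable.comp_mul_add {E : Type*} [NormedAddCommGroup E] {f : ℝ → E}
    {a b c d : ℝ} (hf : IntervalIntegrable f volume (c * a + d) (c * b + d)) (hc : c ≠ 0) :
    IntervalIntegrable (fun x => f (c * x + d)) volume a b := by
  simpa [hc] using (hf.comp_add_right d).comp_mul_left (c := c)

section Concave

variable {f : ℝ → ℝ} {m r : ℝ}

theorem ConcaveOn.apply_add_apply_reflect_le (hf : ConcaveOn ℝ (Icc (m - r) (m + r)) f)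
    {x : ℝ} (hx : x ∈ Icc (m - r) (m + r)) : f x + f (2 * m - x) ≤ 2 * f m := by
  have hx' : 2 * m - x ∈ Icc (m - r) (m + r) := ⟨by linarith [hx.2], by linarith [hx.1]⟩
  have h := hf.2 hx hx' (by norm_num : (0 : ℝ) ≤ 1 / 2) (by norm_num : (0 : ℝ) ≤ 1 / 2)
    (by norm_num)
  simp only [smul_eq_mul] at h
  rw [show (1 / 2 : ℝ) * x + 1 / 2 * (2 * m - x) = m by ring] at h
  linarith

theorem ConcaveOn.intervalIntegral_le_mul_apply_center
    (hf : ConcaveOn ℝ (Icc (m - r) (m + r)) f) (hint : IntegrableOn f (Icc (m - r) (m + r)))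
    (hr : 0 ≤ r) : ∫ x in (m - r)..(m + r), f x ≤ 2 * r * f m := by
  have hle : m - r ≤ m + r := by linarith
  have hI : IntervalIntegrable f volume (m - r) (m + r) :=
    (intervalIntegrable_iff_integrableOn_Icc_of_le hle).2 hint
  have hI_reflect : IntervalIntegrable (fun x => f (2 * m - x)) volume (m - r) (m + r) := by
    have h := (hI.comp_sub_left (2 * m)).symm
    rwa [show 2 * m - (m + r) = m - r by ring, show 2 * m - (m - r) = m + r by ring] at h
  have h := intervalIntegral.integral_mono_on hle (hI.add hI_reflect) intervalIntegrable_const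
    fun x hx => hf.apply_add_apply_reflect_le hx
  rw [intervalIntegral.integral_add hI hI_reflect, intervalIntegral.integral_comp_sub_left,
    show 2 * m - (m + r) = m - r by ring, show 2 * m - (m - r) = m + r by ring,
    intervalIntegral.integral_const, smul_eq_mul] at h
  linarith

theorem ConcaveOn.mul_intervalIntegral_le_mul_intervalIntegral_of_concentric
    (hf : ConcaveOn ℝ (Icc (m - r) (m + r)) f) (hint : IntegrableOn f (Icc (m - r) (m + r)))
    {s : ℝ} (hs : 0 ≤ s) (hsr : s ≤ r) :
    s * ∫ x in (m - r)..(m + r), f x ≤ r * ∫ x in (m - s)..(m + s), f x := by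
  rcases hs.eq_or_lt with rfl | hs
  · simp
  have hr : 0 < r := hs.trans_le hsr
  set t := s / r
  have ht0 : 0 < t := div_pos hs hr
  have ht1 : t ≤ 1 := (div_le_one hr).2 hsr
  have hts : r * t = s := mul_div_cancel₀ s hr.ne'
  have hlo : t * (m - r) + (1 - t) * m = m - s := by rw [← hts]; ring
  have hhi : t * (m + r) + (1 - t) * m = m + s := by rw [← hts]; ring
  have hI : IntervalIntegrable f volume (m - r) (m + r) :=
    (intervalIntegrable_iff_integrableOn_Icc_of_le (by linarith)).2 hint
  have hI_contract : IntervalIntegrable (fun u => f (t * u + (1 - t) * m)) volume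
      (m - r) (m + r) := by
    refine IntervalIntegrable.comp_mul_add ?_ ht0.ne'
    rw [hlo, hhi]
    exact (intervalIntegrable_iff_integrableOn_Icc_of_le (by linarith)).2
      (hint.mono_set (Icc_subset_Icc (by linarith) (by linarith)))
  have hchord : ∀ u ∈ Icc (m - r) (m + r),
      t * f u + (1 - t) * f m ≤ f (t * u + (1 - t) * m) := fun u hu => by
      simpa only [smul_eq_mul] using
        hf.2 hu ⟨by linarith, by linarith⟩ ht0.le (by linarith) (by ring)
  have h := intervalIntegral.integral_mono_on (by linarith)
    ((hI.const_mul t).add intervalIntegrable_const) hI_contract hchord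
  rw [intervalIntegral.integral_add (hI.const_mul t) intervalIntegrable_const,
    intervalIntegral.integral_const_mul, intervalIntegral.integral_const, smul_eq_mul] at h
  have hcenter := hf.intervalIntegral_le_mul_apply_center hint hr.le
  have hmean : ∫ x in (m - r)..(m + r), f x ≤
      ∫ u in (m - r)..(m + r), f (t * u + (1 - t) * m) := by
    linarith [mul_le_mul_of_nonneg_left hcenter (sub_nonneg.2 ht1)]
  rw [← hlo, ← hhi, ← intervalIntegral.smul_integral_comp_mul_add, smul_eq_mul, ← mul_assoc,
    hts]
  exact mul_le_mul_of_nonneg_left hmean hs.le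

end Concave

theorem concave_density_center_power_ge_level_general (f : ℝ → ℝ)
    (hf_concave : ConcaveOn ℝ (Set.Icc (0:ℝ) 1) f)
    (hf_int : IntegrableOn f (Set.Icc (0:ℝ) 1))
    (hf_prob : ∫ t in Set.Icc (0:ℝ) 1, f t = 1)
    (c : ℝ) (hc : c ∈ Set.Icc (0:ℝ) (1/2)) :
    2 * c ≤ ∫ x in {x ∈ Set.Icc (0:ℝ) 1 | |x - 1/2| ≤ c}, f x := by
  obtain ⟨hc0, hc1⟩ := hc
  have hregion : {x ∈ Icc (0:ℝ) 1 | |x - 1/2| ≤ c} = Icc (1/2 - c) (1/2 + c) := by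
    ext x
    simp only [mem_ofPred_eq, mem_Icc, abs_le]
    constructor
    · rintro ⟨-, h₁, h₂⟩; constructor <;> linarith
    · rintro ⟨h₁, h₂⟩; exact ⟨⟨by linarith, by linarith⟩, by linarith, by linarith⟩
  have hunit : Icc (1/2 - 1/2 : ℝ) (1/2 + 1/2) = Icc 0 1 := by norm_num
  have h := ConcaveOn.mul_intervalIntegral_le_mul_intervalIntegral_of_concentric
    (hunit ▸ hf_concave) (hunit ▸ hf_int) hc0 hc1
  rw [intervalIntegral.integral_of_le (by norm_num), ← integral_Icc_eq_integral_Ioc, hunit,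
    hf_prob, intervalIntegral.integral_of_le (by linarith), ← integral_Icc_eq_integral_Ioc] at h
  rw [hregion]
  linarith

theorem concave_density_center_power_ge_level (f : ℝ → ℝ)
    (hf_concave : ConcaveOn ℝ (Set.Icc (0:ℝ) 1) f)
    (hf_nonneg : ∀ t ∈ Set.Icc (0:ℝ) 1, 0 ≤ f t)
    (hf_int : IntegrableOn f (Set.Icc (0:ℝ) 1))
    (hf_prob : ∫ t in Set.Icc (0:ℝ) 1, f t = 1)
    (c : ℝ) (hc : c ∈ Set.Icc (0:ℝ) (1/2)) :
    2 * c ≤ ∫ x in {x ∈ Set.Icc (0:ℝ) 1 | |x - 1/2| ≤ c}, f x :=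
  concave_density_center_power_ge_level_general f hf_concave hf_int hf_prob c hc
end

section
/- Among all measurable subsets R of [0,1] that are symmetric under x ↦ 1−x and have Lebesgue measure at most α, the set {x : f(x)+f(1−x) > k} (for the appropriate k making its measure α, assuming such k exists with no ties) maximizes ∫_R f(x) dx, where f : [0,1] → ℝ≥0 is a probability density. -/
/-!
Since `R` and `R₀` are invariant under `x ↦ 1 - x`, which preserves Lebesgue measure,
`2 ∫_R f = ∫_R g` with `g x = f x + f (1 - x)`, and likewise for `R₀`. So it suffices to compare
`∫ g` over the two sets, and `R₀` is the superlevel set `{g > k}` of `g`: this is the bathtub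
(Neyman–Pearson) argument. On `R \ R₀` we have `g ≤ k`, on `R₀ \ R` we have `g > k`, and
`R \ R₀` is not larger than `R₀ \ R` because `R` is not larger than `R₀`; as `k ≥ 0`,
exchanging `R \ R₀` for `R₀ \ R` can only increase the integral.
-/

open MeasureTheory

section Bathtub

variable {X : Type*} [MeasurableSpace X] {μ : Measure X} {R R₀ : Set X}

theorem measureReal_sdiff_le_measureReal_sdiff (hR : MeasurableSet R) (hR₀ : MeasurableSet R₀)
    (hR₀_fin : μ R₀ ≠ ⊤) (hμ : μ R ≤ μ R₀) : μ.real (R \ R₀) ≤ μ.real (R₀ \ R) := by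
  have hR_fin : μ R ≠ ⊤ := ne_top_of_le_ne_top hR₀_fin hμ
  have hsplitR := measureReal_inter_add_sdiff (μ := μ) (s := R) hR₀ hR_fin
  have hsplitR₀ := measureReal_inter_add_sdiff (μ := μ) (s := R₀) hR hR₀_fin
  have hle : μ.real R ≤ μ.real R₀ := ENNReal.toReal_mono hR₀_fin hμ
  rw [Set.inter_comm] at hsplitR
  linarith

theorem setIntegral_le_setIntegral_of_le_on_sdiff {g : X → ℝ} {k : ℝ} (hk : 0 ≤ k)
    (hR : MeasurableSet R) (hR₀ : MeasurableSet R₀)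
    (hgR : IntegrableOn g R μ) (hgR₀ : IntegrableOn g R₀ μ)
    (hR₀_fin : μ R₀ ≠ ⊤) (hμ : μ R ≤ μ R₀)
    (hlow : ∀ x ∈ R \ R₀, g x ≤ k) (hhigh : ∀ x ∈ R₀ \ R, k ≤ g x) :
    ∫ x in R, g x ∂μ ≤ ∫ x in R₀, g x ∂μ := by
  have hR_fin : μ R ≠ ⊤ := ne_top_of_le_ne_top hR₀_fin hμ
  have hout : ∫ x in R \ R₀, g x ∂μ ≤ k * μ.real (R \ R₀) := by
    calc ∫ x in R \ R₀, g x ∂μ ≤ ∫ _ in R \ R₀, k ∂μ :=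
          setIntegral_mono_on (hgR.mono_set Set.sdiff_subset)
            (integrableOn_const (measure_ne_top_of_subset Set.sdiff_subset hR_fin))
            (hR.diff hR₀) hlow
      _ = k * μ.real (R \ R₀) := by rw [setIntegral_const, smul_eq_mul, mul_comm]
  have hin : k * μ.real (R₀ \ R) ≤ ∫ x in R₀ \ R, g x ∂μ :=
    setIntegral_ge_of_const_le_real (hR₀.diff hR)
      (measure_ne_top_of_subset Set.sdiff_subset hR₀_fin) hhigh (hgR₀.mono_set Set.sdiff_subset)
  have hexchange : k * μ.real (R \ R₀) ≤ k * μ.real (R₀ \ R) :=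
    mul_le_mul_of_nonneg_left (measureReal_sdiff_le_measureReal_sdiff hR hR₀ hR₀_fin hμ) hk
  calc ∫ x in R, g x ∂μ = (∫ x in R₀ ∩ R, g x ∂μ) + ∫ x in R \ R₀, g x ∂μ := by
        rw [← integral_inter_add_sdiff hR₀ hgR, Set.inter_comm]
    _ ≤ (∫ x in R₀ ∩ R, g x ∂μ) + ∫ x in R₀ \ R, g x ∂μ := by linarith
    _ = ∫ x in R₀, g x ∂μ := integral_inter_add_sdiff hR hgR₀

end Bathtub

section Reflection

variable {f : ℝ → ℝ} {a : ℝ} {S : Set ℝ}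

theorem preimage_sub_left_eq_self (hS : ∀ x, x ∈ S ↔ a - x ∈ S) :
    (fun x => a - x) ⁻¹' S = S :=
  Set.ext fun x => (hS x).symm

theorem setIntegral_comp_sub_left_of_symmetric (hS : ∀ x, x ∈ S ↔ a - x ∈ S) :
    ∫ x in S, f (a - x) = ∫ x in S, f x := by
  have := (Measure.measurePreserving_sub_left volume a).setIntegral_preimage_emb
    (Homeomorph.subLeft a).measurableEmbedding f S
  rwa [preimage_sub_left_eq_self hS] at this

theorem MeasureTheory.IntegrableOn.comp_sub_left_of_symmetric (hS : ∀ x, x ∈ S ↔ a - x ∈ S)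
    (hf : IntegrableOn f S) : IntegrableOn (fun x => f (a - x)) S := by
  have := ((Measure.measurePreserving_sub_left volume a).integrableOn_comp_preimage
    (Homeomorph.subLeft a).measurableEmbedding (s := S)).mpr hf
  rwa [preimage_sub_left_eq_self hS] at this

theorem two_mul_setIntegral_eq_setIntegral_add_comp_sub_left (hS : ∀ x, x ∈ S ↔ a - x ∈ S)
    (hf : IntegrableOn f S) : 2 * ∫ x in S, f x = ∫ x in S, f x + f (a - x) := by
  rw [integral_add hf (hf.comp_sub_left_of_symmetric hS),
    setIntegral_comp_sub_left_of_symmetric hS, two_mul]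

end Reflection

theorem avg_lr_region_maximizes_power_general (f : ℝ → ℝ)
    (hf_meas : Measurable f)
    (hf_int : IntegrableOn f (Set.Icc (0:ℝ) 1))
    (α : ℝ) (k : ℝ) (hk : 0 ≤ k)
    (hR₀_level : volume {x ∈ Set.Icc (0:ℝ) 1 | f x + f (1 - x) > k} = ENNReal.ofReal α)
    (R : Set ℝ) (hR_meas : MeasurableSet R) (hR_sub : R ⊆ Set.Icc (0:ℝ) 1)
    (hR_sym : ∀ x, x ∈ R ↔ 1 - x ∈ R)
    (hR_level : volume R ≤ ENNReal.ofReal α) :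
    ∫ x in R, f x ≤ ∫ x in {x ∈ Set.Icc (0:ℝ) 1 | f x + f (1 - x) > k}, f x := by
  set R₀ := {x ∈ Set.Icc (0:ℝ) 1 | f x + f (1 - x) > k}
  have hR₀_meas : MeasurableSet R₀ :=
    measurableSet_Icc.inter (measurableSet_lt measurable_const
      (hf_meas.add (hf_meas.comp (measurable_const.sub measurable_id))))
  have hR₀_sym : ∀ x, x ∈ R₀ ↔ 1 - x ∈ R₀ := fun x => by
    simp only [R₀, Set.mem_ofPred_eq, Set.mem_Icc, sub_sub_cancel]
    constructor <;> rintro ⟨⟨h0, h1⟩, hk⟩ <;> refine ⟨⟨?_, ?_⟩, ?_⟩ <;> linarith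
  have hfR := hf_int.mono_set hR_sub
  have hfR₀ := hf_int.mono_set (Set.sep_subset _ _ : R₀ ⊆ _)
  have hbathtub : ∫ x in R, f x + f (1 - x) ≤ ∫ x in R₀, f x + f (1 - x) :=
    setIntegral_le_setIntegral_of_le_on_sdiff hk hR_meas hR₀_meas
      (hfR.add (hfR.comp_sub_left_of_symmetric hR_sym))
      (hfR₀.add (hfR₀.comp_sub_left_of_symmetric hR₀_sym))
      (hR₀_level ▸ ENNReal.ofReal_ne_top) (hR_level.trans hR₀_level.ge)
      (fun x hx => not_lt.mp fun h => hx.2 ⟨hR_sub hx.1, h⟩) (fun x hx => hx.1.2.le)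
  linarith [two_mul_setIntegral_eq_setIntegral_add_comp_sub_left hR_sym hfR,
    two_mul_setIntegral_eq_setIntegral_add_comp_sub_left hR₀_sym hfR₀]

theorem avg_lr_region_maximizes_power (f : ℝ → ℝ)
    (hf_meas : Measurable f) (hf_nonneg : ∀ t, 0 ≤ f t)
    (hf_int : IntegrableOn f (Set.Icc (0:ℝ) 1))
    (hf_prob : ∫ t in Set.Icc (0:ℝ) 1, f t = 1)
    (α : ℝ) (hα : α ∈ Set.Ioo (0:ℝ) 1) (k : ℝ) (hk : 0 ≤ k)
    (hR₀_level : volume {x ∈ Set.Icc (0:ℝ) 1 | f x + f (1 - x) > k} = ENNReal.ofReal α)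
    (R : Set ℝ) (hR_meas : MeasurableSet R) (hR_sub : R ⊆ Set.Icc (0:ℝ) 1)
    (hR_sym : ∀ x, x ∈ R ↔ 1 - x ∈ R)
    (hR_level : volume R ≤ ENNReal.ofReal α) :
    ∫ x in R, f x ≤ ∫ x in {x ∈ Set.Icc (0:ℝ) 1 | f x + f (1 - x) > k}, f x :=
  avg_lr_region_maximizes_power_general f hf_meas hf_int α k hk hR₀_level R hR_meas hR_sub hR_sym
    hR_level
end

section
/- Under the hypotheses of the finite-group setting (G finite, acting measure-preservingly, permuting p₁,…,p_s transitively, fixing p₀), the G-invariant region R₀ = {x : Σᵢ pᵢ(x) > k·p₀(x)} maximizes ∫_R p_j dμ for every j simultaneously, among all G-invariant measurable R with ∫_R p₀ dμ ≤ ∫_{R₀} p₀ dμ. -/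
/-!
Measure preservation and transitivity of the permutation action make all `p j` have the same
integral over a `G`-invariant set, namely `1 / s` of the integral of `∑ i, p i`. Since `R₀` is
itself `G`-invariant, the claim reduces to the Neyman–Pearson lemma for the single likelihood
ratio `∑ i, p i / p₀`.
-/

open MeasureTheory

theorem setIntegral_le_of_neymanPearson {X : Type*} [MeasurableSpace X] {μ : Measure X}
    {f g : X → ℝ} (hf : Integrable f μ) (hg : Integrable g μ) {k : ℝ} (hk : 0 ≤ k)
    {A B : Set X} (hA : MeasurableSet A) (hB : MeasurableSet B)
    (hAB : ∀ x ∈ A \ B, k * g x ≤ f x) (hBA : ∀ x ∈ B \ A, f x ≤ k * g x)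
    (hlevel : ∫ x in B, g x ∂μ ≤ ∫ x in A, g x ∂μ) :
    ∫ x in B, f x ∂μ ≤ ∫ x in A, f x ∂μ := by
  have hfA := integral_inter_add_sdiff (μ := μ) hB hf.integrableOn (s := A)
  have hfB := integral_inter_add_sdiff (μ := μ) hA hf.integrableOn (s := B)
  have hgA := integral_inter_add_sdiff (μ := μ) hB hg.integrableOn (s := A)
  have hgB := integral_inter_add_sdiff (μ := μ) hA hg.integrableOn (s := B)
  rw [Set.inter_comm] at hfB hgB
  have hf_BA : ∫ x in B \ A, f x ∂μ ≤ k * ∫ x in B \ A, g x ∂μ := by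
    rw [← integral_const_mul]
    exact setIntegral_mono_on hf.integrableOn (hg.const_mul k).integrableOn (hB.diff hA) hBA
  have hf_AB : k * ∫ x in A \ B, g x ∂μ ≤ ∫ x in A \ B, f x ∂μ := by
    rw [← integral_const_mul]
    exact setIntegral_mono_on (hg.const_mul k).integrableOn hf.integrableOn (hA.diff hB) hAB
  have hg_diff : ∫ x in B \ A, g x ∂μ ≤ ∫ x in A \ B, g x ∂μ := by linarith
  linarith [mul_le_mul_of_nonneg_left hg_diff hk]

theorem MeasureTheory.MeasurePreserving.setIntegral_comp_of_preimage_eq {X E : Type*}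
    [MeasurableSpace X] [NormedAddCommGroup E] [NormedSpace ℝ E] {μ : Measure X} {f : X → X}
    (hf : MeasurePreserving f μ μ) {S : Set X} (hS : MeasurableSet S) (hfS : f ⁻¹' S = S)
    {F : X → E} (hF : AEStronglyMeasurable F (μ.restrict S)) :
    ∫ x in S, F (f x) ∂μ = ∫ x in S, F x ∂μ := by
  have hmap : (μ.restrict S).map f = μ.restrict S := by
    simpa only [hfS] using (hf.restrict_preimage hS).map_eq
  calc ∫ x in S, F (f x) ∂μ = ∫ x, F x ∂(μ.restrict S).map f :=
        (integral_map hf.measurable.aemeasurable (by rwa [hmap])).symm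
    _ = ∫ x in S, F x ∂μ := by rw [hmap]

section InvariantSets

variable {X G ι E : Type*} [MeasurableSpace X] [NormedAddCommGroup E] [NormedSpace ℝ E]
  {μ : Measure X} {a : G → X → X} {p : ι → X → E} {σ : G → Equiv.Perm ι} {S : Set X}

theorem setIntegral_eq_of_transitive (ha : ∀ g, MeasurePreserving (a g) μ μ)
    (hp : ∀ i, AEStronglyMeasurable (p i) μ) (hperm : ∀ g i x, p i (a g x) = p (σ g i) x)
    (htrans : ∀ i j, ∃ g, σ g i = j) (hS : MeasurableSet S) (hS_inv : ∀ g, a g ⁻¹' S = S)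
    (i j : ι) : ∫ x in S, p i x ∂μ = ∫ x in S, p j x ∂μ := by
  obtain ⟨g, rfl⟩ := htrans i j
  rw [← (ha g).setIntegral_comp_of_preimage_eq hS (hS_inv g) (hp i).restrict]
  simp only [hperm]

theorem setIntegral_sum_eq_card_smul [Fintype ι] (ha : ∀ g, MeasurePreserving (a g) μ μ)
    (hp : ∀ i, Integrable (p i) μ) (hperm : ∀ g i x, p i (a g x) = p (σ g i) x)
    (htrans : ∀ i j, ∃ g, σ g i = j) (hS : MeasurableSet S) (hS_inv : ∀ g, a g ⁻¹' S = S)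
    (j : ι) : ∫ x in S, ∑ i, p i x ∂μ = Fintype.card ι • ∫ x in S, p j x ∂μ := by
  rw [integral_finsetSum _ fun i _ => (hp i).integrableOn,
    Finset.sum_congr rfl fun i _ => setIntegral_eq_of_transitive ha
      (fun i => (hp i).aestronglyMeasurable) hperm htrans hS hS_inv i j,
    Finset.sum_const, Finset.card_univ]

end InvariantSets

theorem preimage_setOf_sum_gt_mul_eq {X ι : Type*} [Fintype ι] {f : X → X} {p₀ : X → ℝ}
    {p : ι → X → ℝ} {τ : Equiv.Perm ι} (hp₀ : ∀ x, p₀ (f x) = p₀ x)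
    (hp : ∀ i x, p i (f x) = p (τ i) x) (k : ℝ) :
    f ⁻¹' {x | ∑ i, p i x > k * p₀ x} = {x | ∑ i, p i x > k * p₀ x} := by
  ext x
  simp only [Set.mem_preimage, Set.mem_ofPred_eq, hp₀, hp, Equiv.sum_comp τ fun i => p i x]

theorem sum_lr_region_ump_invariant_general {X : Type*} [MeasurableSpace X] (μ : Measure X)
    {G : Type*} [Group G] (a : G → X → X)
    (ha_mp : ∀ g, MeasurePreserving (a g) μ μ)
    (s : ℕ) (p₀ : X → ℝ) (p : Fin s → X → ℝ)
    (hp₀_meas : Measurable p₀) (hp_meas : ∀ i, Measurable (p i))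
    (hp₀_int : Integrable p₀ μ) (hp_int : ∀ i, Integrable (p i) μ)
    (hp₀_inv : ∀ g x, p₀ (a g⁻¹ x) = p₀ x)
    (σ : G → Equiv.Perm (Fin s))
    (hperm : ∀ g i x, p i (a g⁻¹ x) = p (σ g i) x)
    (htrans : ∀ i j : Fin s, ∃ g : G, σ g i = j)
    (k : ℝ) (hk : 0 ≤ k)
    (R₀ : Set X) (hR₀ : R₀ = {x | ∑ i, p i x > k * p₀ x})
    (R : Set X) (hR_meas : MeasurableSet R) (hR_inv : ∀ g, a g ⁻¹' R = R)
    (hlevel : ∫ x in R, p₀ x ∂μ ≤ ∫ x in R₀, p₀ x ∂μ) :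
    ∀ j : Fin s, ∫ x in R, p j x ∂μ ≤ ∫ x in R₀, p j x ∂μ := by
  intro j
  have hR₀_meas : MeasurableSet R₀ :=
    hR₀ ▸ measurableSet_lt (hp₀_meas.const_mul k) (Finset.measurable_sum _ fun i _ => hp_meas i)
  have hR₀_inv : ∀ g, a g⁻¹ ⁻¹' R₀ = R₀ := fun g =>
    hR₀ ▸ preimage_setOf_sum_gt_mul_eq (hp₀_inv g) (hperm g) k
  have hsum_le : ∫ x in R, ∑ i, p i x ∂μ ≤ ∫ x in R₀, ∑ i, p i x ∂μ := by
    refine setIntegral_le_of_neymanPearson (integrable_finsetSum _ fun i _ => hp_int i) hp₀_int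
      hk hR₀_meas hR_meas (fun x hx => ?_) (fun x hx => ?_) hlevel
    · exact (hR₀ ▸ hx.1 : x ∈ {x | ∑ i, p i x > k * p₀ x}).le
    · exact not_lt.mp (hR₀ ▸ hx.2 : x ∉ {x | ∑ i, p i x > k * p₀ x})
  have hsplit := fun S hS hS_inv =>
    setIntegral_sum_eq_card_smul (a := fun g => a g⁻¹) (S := S) (fun g => ha_mp g⁻¹) hp_int
      hperm htrans hS hS_inv j
  rw [hsplit R hR_meas fun g => hR_inv g⁻¹, hsplit R₀ hR₀_meas hR₀_inv, Fintype.card_fin]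
    at hsum_le
  exact (nsmul_le_nsmul_iff_right (Fin.pos j).ne').mp hsum_le

theorem sum_lr_region_ump_invariant {X : Type*} [MeasurableSpace X] (μ : Measure X)
    {G : Type*} [Group G] [Fintype G] (a : G → X → X)
    (ha_hom : ∀ g h x, a (g * h) x = a g (a h x)) (ha_one : ∀ x, a 1 x = x)
    (ha_meas : ∀ g, Measurable (a g))
    (ha_mp : ∀ g, MeasurePreserving (a g) μ μ)
    (s : ℕ) (p₀ : X → ℝ) (p : Fin s → X → ℝ)
    (hp₀_meas : Measurable p₀) (hp_meas : ∀ i, Measurable (p i))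
    (hp₀_int : Integrable p₀ μ) (hp_int : ∀ i, Integrable (p i) μ)
    (hp₀_nonneg : ∀ x, 0 ≤ p₀ x) (hp_nonneg : ∀ i x, 0 ≤ p i x)
    (hp₀_inv : ∀ g x, p₀ (a g⁻¹ x) = p₀ x)
    (σ : G → Equiv.Perm (Fin s))
    (hperm : ∀ g i x, p i (a g⁻¹ x) = p (σ g i) x)
    (htrans : ∀ i j : Fin s, ∃ g : G, σ g i = j)
    (k : ℝ) (hk : 0 ≤ k)
    (R₀ : Set X) (hR₀ : R₀ = {x | ∑ i, p i x > k * p₀ x})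
    (R : Set X) (hR_meas : MeasurableSet R) (hR_inv : ∀ g, a g ⁻¹' R = R)
    (hlevel : ∫ x in R, p₀ x ∂μ ≤ ∫ x in R₀, p₀ x ∂μ) :
    ∀ j : Fin s, ∫ x in R, p j x ∂μ ≤ ∫ x in R₀, p j x ∂μ :=
  sum_lr_region_ump_invariant_general μ a ha_mp s p₀ p hp₀_meas hp_meas hp₀_int hp_int hp₀_inv σ
    hperm htrans k hk R₀ hR₀ R hR_meas hR_inv hlevel
end
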